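/- arXiv:1903.05873 — 2 statements merged into one kernel-verified Lean document; each statement's English description precedes it below -/
import Mathlib

section
/- Let Ω ⊆ ℝ have finite Lebesgue measure and let p, q : Ω → [1,∞] be measurable with q ≤ p a.e. on Ω. Then L^{p(x)}(Ω : X) embeds continuously into L^{q(x)}(Ω : X). -/
open MeasureTheory Set ENNReal Real
noncomputable section

/-- The Young-type function `φ_{p}(t)`: `t^p` for `p < ∞`, and `0` for `t ≤ 1`, `∞` for `t > 1`
when `p = ∞`. -/
def phiVar (p : ℝ≥0∞) (t : ℝ) : ℝ≥0∞ :=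
  if p = ⊤ then (if t ≤ 1 then 0 else ⊤) else ENNReal.ofReal (t ^ p.toReal)

/-- The modular `ρ(g) = ∫_Ω φ_{p(x)}(g(x)) dx` of a nonnegative function `g`. -/
def rhoVar (p : ℝ → ℝ≥0∞) (Ω : Set ℝ) (g : ℝ → ℝ) : ℝ≥0∞ :=
  ∫⁻ x in Ω, phiVar (p x) (g x)

/-- The Luxemburg norm of `f` on `Ω` with variable exponent `p`. -/
def luxNorm {X : Type*} [NormedAddCommGroup X] (p : ℝ → ℝ≥0∞) (Ω : Set ℝ) (f : ℝ → X) : ℝ :=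
  sInf {lam : ℝ | 0 < lam ∧ rhoVar p Ω (fun x => ‖f x‖ / lam) ≤ 1}

/-- Membership in the variable-exponent Lebesgue space `L^{p(x)}(Ω : X)`. -/
def MemLvar {X : Type*} [NormedAddCommGroup X] (p : ℝ → ℝ≥0∞) (Ω : Set ℝ) (f : ℝ → X) : Prop :=
  AEStronglyMeasurable f (volume.restrict Ω) ∧
    ∃ lam > 0, rhoVar p Ω (fun x => lam * ‖f x‖) < ⊤

/-- Stepanov `p(x)`-boundedness: all translates lie in `L^{p(x)}([0,1]:X)` with uniformly
bounded Luxemburg norms. -/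
def StepanovBounded {X : Type*} [NormedAddCommGroup X] (p : ℝ → ℝ≥0∞) (I : Set ℝ)
    (f : ℝ → X) : Prop :=
  (∀ t ∈ I, MemLvar p (Icc 0 1) (fun s => f (t + s))) ∧
    ∃ C : ℝ, ∀ t ∈ I, luxNorm p (Icc 0 1) (fun s => f (t + s)) ≤ C

/-- The Stepanov `p(x)`-norm `sup_{t ∈ I} ‖f(t+·)‖_{L^{p(x)}[0,1]}`. -/
def stepNorm {X : Type*} [NormedAddCommGroup X] (p : ℝ → ℝ≥0∞) (I : Set ℝ) (f : ℝ → X) : ℝ :=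
  sSup ((fun t => luxNorm p (Icc 0 1) (fun s => f (t + s))) '' I)

/-- `S` is relatively dense in `I`: there is `l > 0` such that every subinterval of `I` of
length `l` meets `S`. -/
def RelDenseIn (I S : Set ℝ) : Prop :=
  ∃ l > 0, ∀ a : ℝ, Icc a (a + l) ⊆ I → (S ∩ Icc a (a + l)).Nonempty

/-- Bohr almost periodicity of `f : I → X`. -/
def AlmostPeriodicOn {X : Type*} [NormedAddCommGroup X] (I : Set ℝ) (f : ℝ → X) : Prop :=
  ContinuousOn f I ∧
    ∀ ε > 0, RelDenseIn I {τ | 0 < τ ∧ ∀ t ∈ I, ‖f (t + τ) - f t‖ ≤ ε}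

/-- Stepanov `p(x)`-almost periodicity: the map `t ↦ f(t+·)` into `L^{p(x)}([0,1]:X)` is
well defined, continuous and almost periodic. -/
def StepanovAP {X : Type*} [NormedAddCommGroup X] (p : ℝ → ℝ≥0∞) (I : Set ℝ) (f : ℝ → X) : Prop :=
  (∀ t ∈ I, MemLvar p (Icc 0 1) (fun s => f (t + s))) ∧
  (∀ t ∈ I, ∀ ε > 0, ∃ δ > 0, ∀ t' ∈ I, |t' - t| < δ →
      luxNorm p (Icc 0 1) (fun s => f (t' + s) - f (t + s)) ≤ ε) ∧
  (∀ ε > 0, RelDenseIn I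
      {τ | 0 < τ ∧ ∀ t ∈ I, luxNorm p (Icc 0 1) (fun s => f (t + τ + s) - f (t + s)) ≤ ε})

/-! Pointwise, `φ_q ≤ φ_p + 1` when `q ≤ p`, so on a set of finite measure the `q`-modular is
at most the `p`-modular plus `|Ω|`. Since `q ≥ 1`, dividing the argument by `c ≥ 1` divides the
`q`-modular by at least `c`; hence `ρ_p(f/λ) ≤ 1` gives `ρ_q(f/((|Ω| + 1)λ)) ≤ 1`, and passing to
the infimum yields `‖f‖_q ≤ (|Ω| + 1) ‖f‖_p`. -/

lemma phiVar_le_phiVar_add_one {p q : ℝ≥0∞} {t : ℝ} (hqp : q ≤ p) (ht : 0 ≤ t) :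
    phiVar q t ≤ phiVar p t + 1 := by
  have h_le_one : ∀ r : ℝ≥0∞, t ≤ 1 → ENNReal.ofReal (t ^ r.toReal) ≤ 1 := fun r h =>
    ENNReal.ofReal_le_one.mpr (Real.rpow_le_one ht h ENNReal.toReal_nonneg)
  unfold phiVar
  by_cases hq : q = ⊤
  · have hp : p = ⊤ := top_le_iff.mp (hq ▸ hqp)
    simp only [hq, hp, if_true]
    split_ifs <;> simp
  by_cases hp : p = ⊤
  · simp only [hq, hp, if_true, if_false]
    split_ifs with h
    · simpa using h_le_one q h
    · simp
  simp only [hq, hp, if_false]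
  rcases le_or_gt t 1 with h | h
  · exact (h_le_one q h).trans le_add_self
  · exact le_add_right <| ENNReal.ofReal_le_ofReal <|
      Real.rpow_le_rpow_of_exponent_le h.le (ENNReal.toReal_mono hp hqp)

lemma phiVar_div_le {q : ℝ≥0∞} {t c : ℝ} (hq1 : 1 ≤ q) (hc : 1 ≤ c) (ht : 0 ≤ t) :
    phiVar q (t / c) ≤ phiVar q t / ENNReal.ofReal c := by
  have hc0 : 0 < c := one_pos.trans_le hc
  unfold phiVar
  by_cases hq : q = ⊤
  · simp only [hq, if_true]
    split_ifs with h1 h2 h3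
    · exact zero_le
    · exact zero_le
    · exact absurd ((div_le_self ht hc).trans h3) h1
    · rw [ENNReal.top_div_of_ne_top ENNReal.ofReal_ne_top]
  have hq' : 1 ≤ q.toReal := by simpa using ENNReal.toReal_mono hq hq1
  simp only [hq, if_false]
  rw [Real.div_rpow ht hc0.le, ENNReal.ofReal_div_of_pos (Real.rpow_pos_of_pos hc0 _)]
  gcongr
  calc c = c ^ (1 : ℝ) := (Real.rpow_one c).symm
    _ ≤ c ^ q.toReal := Real.rpow_le_rpow_of_exponent_le hc hq'

lemma rhoVar_le_rhoVar_add_volume {p q : ℝ → ℝ≥0∞} {Ω : Set ℝ} {g : ℝ → ℝ}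
    (hqp : ∀ᵐ x ∂(volume.restrict Ω), q x ≤ p x) (hg : ∀ x, 0 ≤ g x) :
    rhoVar q Ω g ≤ rhoVar p Ω g + volume Ω :=
  calc ∫⁻ x in Ω, phiVar (q x) (g x)
      ≤ ∫⁻ x in Ω, (phiVar (p x) (g x) + 1) :=
        lintegral_mono_ae (hqp.mono fun x hx => phiVar_le_phiVar_add_one hx (hg x))
    _ = rhoVar p Ω g + volume Ω := by
        rw [lintegral_add_right _ measurable_const, setLIntegral_one, rhoVar]

lemma rhoVar_div_le {q : ℝ → ℝ≥0∞} {Ω : Set ℝ} {g : ℝ → ℝ} {c : ℝ}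
    (hq1 : ∀ x, 1 ≤ q x) (hc : 1 ≤ c) (hg : ∀ x, 0 ≤ g x) :
    rhoVar q Ω (fun x => g x / c) ≤ rhoVar q Ω g / ENNReal.ofReal c :=
  calc ∫⁻ x in Ω, phiVar (q x) (g x / c)
      ≤ ∫⁻ x in Ω, phiVar (q x) (g x) / ENNReal.ofReal c :=
        lintegral_mono fun x => phiVar_div_le (hq1 x) hc (hg x)
    _ = rhoVar q Ω g / ENNReal.ofReal c := by
        simp_rw [div_eq_mul_inv]
        exact lintegral_mul_const' _ _
          (ENNReal.inv_ne_top.mpr (ENNReal.ofReal_pos.mpr (one_pos.trans_le hc)).ne')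

lemma exists_rhoVar_div_le_one_of_lt_top {p : ℝ → ℝ≥0∞} {Ω : Set ℝ} {g : ℝ → ℝ}
    (hp1 : ∀ x, 1 ≤ p x) (hg : ∀ x, 0 ≤ g x) (hfin : rhoVar p Ω g < ⊤) :
    ∃ c ≥ 1, rhoVar p Ω (fun x => g x / c) ≤ 1 := by
  set A := rhoVar p Ω g
  refine ⟨A.toReal + 1, by linarith [ENNReal.toReal_nonneg (a := A)], ?_⟩
  calc rhoVar p Ω (fun x => g x / (A.toReal + 1))
      ≤ A / ENNReal.ofReal (A.toReal + 1) :=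
        rhoVar_div_le hp1 (by linarith [ENNReal.toReal_nonneg (a := A)]) hg
    _ = A / (A + 1) := by
        rw [ENNReal.ofReal_add ENNReal.toReal_nonneg zero_le_one, ENNReal.ofReal_toReal hfin.ne,
          ENNReal.ofReal_one]
    _ ≤ 1 := ENNReal.div_le_of_le_mul (by rw [one_mul]; exact le_self_add)

lemma rhoVar_div_volume_add_one_le_one {p q : ℝ → ℝ≥0∞} {Ω : Set ℝ} {g : ℝ → ℝ}
    (hfin : volume Ω < ⊤) (hq1 : ∀ x, 1 ≤ q x) (hqp : ∀ᵐ x ∂(volume.restrict Ω), q x ≤ p x)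
    (hg : ∀ x, 0 ≤ g x) (hρ : rhoVar p Ω g ≤ 1) :
    rhoVar q Ω (fun x => g x / ((volume Ω).toReal + 1)) ≤ 1 :=
  calc rhoVar q Ω (fun x => g x / ((volume Ω).toReal + 1))
      ≤ rhoVar q Ω g / ENNReal.ofReal ((volume Ω).toReal + 1) :=
        rhoVar_div_le hq1 (by simp) hg
    _ ≤ (1 + volume Ω) / (volume Ω + 1) := by
        rw [ENNReal.ofReal_add ENNReal.toReal_nonneg zero_le_one, ENNReal.ofReal_toReal hfin.ne,
          ENNReal.ofReal_one]
        gcongr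
        exact (rhoVar_le_rhoVar_add_volume hqp hg).trans (add_le_add_left hρ _)
    _ ≤ 1 := by rw [add_comm]; exact ENNReal.div_self_le_one

lemma MemLvar.mono_exponent {X : Type*} [NormedAddCommGroup X] {p q : ℝ → ℝ≥0∞} {Ω : Set ℝ}
    {f : ℝ → X} (hf : MemLvar p Ω f) (hfin : volume Ω < ⊤)
    (hqp : ∀ᵐ x ∂(volume.restrict Ω), q x ≤ p x) : MemLvar q Ω f := by
  obtain ⟨hmeas, lam, hlam, hρ⟩ := hf
  exact ⟨hmeas, lam, hlam, (rhoVar_le_rhoVar_add_volume hqp fun x => by positivity).trans_lt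
    (ENNReal.add_lt_top.mpr ⟨hρ, hfin⟩)⟩

lemma MemLvar.exists_rhoVar_div_le_one {X : Type*} [NormedAddCommGroup X] {p : ℝ → ℝ≥0∞}
    {Ω : Set ℝ} {f : ℝ → X} (hf : MemLvar p Ω f) (hp1 : ∀ x, 1 ≤ p x) :
    ∃ lam > 0, rhoVar p Ω (fun x => ‖f x‖ / lam) ≤ 1 := by
  obtain ⟨-, lam, hlam, hρ⟩ := hf
  obtain ⟨c, hc, hρc⟩ := exists_rhoVar_div_le_one_of_lt_top hp1 (fun x => by positivity) hρ
  refine ⟨c / lam, div_pos (one_pos.trans_le hc) hlam, ?_⟩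
  convert hρc using 3 with x
  field_simp

lemma luxNorm_le_mul_luxNorm {X : Type*} [NormedAddCommGroup X] {p q : ℝ → ℝ≥0∞}
    {Ω : Set ℝ} {f : ℝ → X} {C : ℝ} (hC : 0 < C)
    (hp : ∃ lam > 0, rhoVar p Ω (fun x => ‖f x‖ / lam) ≤ 1)
    (hpq : ∀ lam > 0, rhoVar p Ω (fun x => ‖f x‖ / lam) ≤ 1 →
      rhoVar q Ω (fun x => ‖f x‖ / (C * lam)) ≤ 1) :
    luxNorm q Ω f ≤ C * luxNorm p Ω f := by
  obtain ⟨lam, hlam, hρ⟩ := hp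
  rw [luxNorm, luxNorm, ← smul_eq_mul, ← Real.sInf_smul_of_nonneg hC.le]
  refine csInf_le_csInf ⟨0, fun _ h => h.1.le⟩ ⟨C * lam, lam, ⟨hlam, hρ⟩, rfl⟩ ?_
  rintro _ ⟨lam, ⟨hlam, hρ⟩, rfl⟩
  exact ⟨mul_pos hC hlam, hpq lam hlam hρ⟩

theorem stmt2_general {X : Type*} [NormedAddCommGroup X] (Ω : Set ℝ)
    (hfin : volume Ω < ⊤)
    (p q : ℝ → ℝ≥0∞)
    (hp1 : ∀ x, 1 ≤ p x) (hq1 : ∀ x, 1 ≤ q x)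
    (hqp : ∀ᵐ x ∂(volume.restrict Ω), q x ≤ p x) :
    ∃ C > 0, ∀ f : ℝ → X, MemLvar p Ω f →
      MemLvar q Ω f ∧ luxNorm q Ω f ≤ C * luxNorm p Ω f := by
  refine ⟨(volume Ω).toReal + 1, by positivity, fun f hf => ⟨hf.mono_exponent hfin hqp, ?_⟩⟩
  refine luxNorm_le_mul_luxNorm (by positivity) (hf.exists_rhoVar_div_le_one hp1) ?_
  intro lam hlam hρ
  convert rhoVar_div_volume_add_one_le_one hfin hq1 hqp (fun x => by positivity) hρ using 3
  rw [div_div, mul_comm]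

theorem stmt2 {X : Type*} [NormedAddCommGroup X] (Ω : Set ℝ) (hΩ : MeasurableSet Ω)
    (hfin : volume Ω < ⊤)
    (p q : ℝ → ℝ≥0∞) (hpm : Measurable p) (hqm : Measurable q)
    (hp1 : ∀ x, 1 ≤ p x) (hq1 : ∀ x, 1 ≤ q x)
    (hqp : ∀ᵐ x ∂(volume.restrict Ω), q x ≤ p x) :
    ∃ C > 0, ∀ f : ℝ → X, MemLvar p Ω f →
      MemLvar q Ω f ∧ luxNorm q Ω f ≤ C * luxNorm p Ω f :=
  stmt2_general Ω hfin p q hp1 hq1 hqp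
end
end

section
/- A continuous bounded function f : I → X is almost periodic if and only if it is Stepanov ∞-almost periodic, i.e., AP(I:X) = APS^∞(I:X) ∩ C(I:X). -/
open MeasureTheory Set ENNReal Real
noncomputable section

/-
For `p = ∞` the Luxemburg norm on `[0,1]` is the essential supremum, and for a function that is
continuous on `[0,1]` the essential supremum of its norm is its supremum. Hence, for continuous `f`,
`‖f(t + τ + ·) - f(t + ·)‖_{L^∞[0,1]} ≤ ε` for all `t ∈ I` says exactly that
`‖f(t + τ) - f(t)‖ ≤ ε` for all `t ∈ I`: Bohr and Stepanov-∞ almost periods coincide. Continuity of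
`t ↦ f(t + ·)` in `L^∞` is uniform continuity of `f` on compact pieces of the closed set `I`.
-/

lemma phiVar_top_of_le_one {t : ℝ} (ht : t ≤ 1) : phiVar ⊤ t = 0 := by
  simp [phiVar, ht]

lemma phiVar_top_of_one_lt {t : ℝ} (ht : 1 < t) : phiVar ⊤ t = ⊤ := by
  simp [phiVar, ht.not_ge]

lemma measurable_phiVar_top : Measurable (phiVar ⊤) := by
  have : phiVar ⊤ = (Iic 1).piecewise (fun _ => 0) (fun _ => ⊤) := by
    ext t
    by_cases ht : t ≤ 1 <;> simp [phiVar, ht]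
  rw [this]
  exact measurable_const.piecewise measurableSet_Iic measurable_const

lemma rhoVar_top_eq_zero {Ω : Set ℝ} (hΩ : MeasurableSet Ω) {g : ℝ → ℝ}
    (hg : ∀ x ∈ Ω, g x ≤ 1) : rhoVar (fun _ => ⊤) Ω g = 0 :=
  setLIntegral_eq_zero hΩ fun x hx => phiVar_top_of_le_one (hg x hx)

lemma ae_le_one_of_rhoVar_top_ne_top {Ω : Set ℝ} {g : ℝ → ℝ}
    (hg : AEMeasurable g (volume.restrict Ω)) (hρ : rhoVar (fun _ => ⊤) Ω g ≠ ⊤) :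
    ∀ᵐ x ∂volume.restrict Ω, g x ≤ 1 := by
  filter_upwards [ae_lt_top' (measurable_phiVar_top.comp_aemeasurable hg) hρ] with x hx
  by_contra hgx
  exact hx.ne (phiVar_top_of_one_lt (not_le.mp hgx))

lemma forall_le_of_ae_le_of_continuousOn_Icc {μ : Measure ℝ} [μ.IsOpenPosMeasure] {a b : ℝ}
    (hab : a ≠ b) {u : ℝ → ℝ} (hu : ContinuousOn u (Icc a b)) {c : ℝ}
    (h : ∀ᵐ x ∂μ.restrict (Icc a b), u x ≤ c) : ∀ x ∈ Icc a b, u x ≤ c := by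
  have hmin : EqOn (fun x => min (u x) c) u (Icc a b) :=
    Measure.eqOn_Icc_of_ae_eq μ hab (h.mono fun x hx => min_eq_left hx)
      (hu.inf continuousOn_const) hu
  exact fun x hx => min_eq_left_iff.mp (hmin hx)

section LuxemburgTop

variable {X : Type*} [NormedAddCommGroup X]

lemma luxNorm_top_le_of_forall_norm_le {Ω : Set ℝ} (hΩ : MeasurableSet Ω) {f : ℝ → X} {ε : ℝ}
    (hε : 0 < ε) (hf : ∀ s ∈ Ω, ‖f s‖ ≤ ε) : luxNorm (fun _ => ⊤) Ω f ≤ ε :=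
  csInf_le ⟨0, fun _ hl => hl.1.le⟩
    ⟨hε, (rhoVar_top_eq_zero hΩ fun s hs => (div_le_one hε).mpr (hf s hs)).trans_le zero_le⟩

lemma IsCompact.memLvar_top {Ω : Set ℝ} (hK : IsCompact Ω) (hΩ : MeasurableSet Ω) {f : ℝ → X}
    (hf : ContinuousOn f Ω) : MemLvar (fun _ => ⊤) Ω f := by
  obtain ⟨C, hC⟩ := hK.exists_bound_of_continuousOn hf
  refine ⟨hf.aestronglyMeasurable hΩ, (max C 1)⁻¹, by positivity, ?_⟩
  refine (rhoVar_top_eq_zero hΩ fun s hs => ?_).trans_lt zero_lt_top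
  rw [inv_mul_le_one₀ (by positivity)]
  exact (hC s hs).trans (le_max_left _ _)

lemma forall_norm_le_of_luxNorm_top_le {a b : ℝ} (hab : a ≠ b) {f : ℝ → X}
    (hf : ContinuousOn f (Icc a b)) {ε : ℝ} (hlux : luxNorm (fun _ => ⊤) (Icc a b) f ≤ ε) :
    ∀ s ∈ Icc a b, ‖f s‖ ≤ ε := by
  intro s hs
  refine le_of_forall_gt_imp_ge_of_dense fun lam hlam => ?_
  obtain ⟨C, hC⟩ := isCompact_Icc.exists_bound_of_continuousOn hf
  have hne : {l : ℝ | 0 < l ∧ rhoVar (fun _ => ⊤) (Icc a b) (fun x => ‖f x‖ / l) ≤ 1}.Nonempty :=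
    ⟨max C 1, by positivity, (rhoVar_top_eq_zero measurableSet_Icc fun x hx =>
      (div_le_one (by positivity)).mpr ((hC x hx).trans (le_max_left _ _))).trans_le zero_le⟩
  obtain ⟨l, ⟨hl, hρ⟩, hl_lt⟩ :=
    (csInf_lt_iff ⟨0, fun _ hl => hl.1.le⟩ hne).mp (hlux.trans_lt hlam)
  have hae : ∀ᵐ x ∂volume.restrict (Icc a b), ‖f x‖ ≤ l := by
    have hmeas : AEMeasurable (fun x => ‖f x‖ / l) (volume.restrict (Icc a b)) :=
      ((hf.norm.div_const l).aestronglyMeasurable measurableSet_Icc).aemeasurable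
    filter_upwards [ae_le_one_of_rhoVar_top_ne_top hmeas (hρ.trans_lt one_lt_top).ne]
      with x hx using (div_le_one hl).mp hx
  exact (forall_le_of_ae_le_of_continuousOn_Icc hab hf.norm hae s hs).trans hl_lt.le

lemma luxNorm_top_le_iff {a b : ℝ} (hab : a ≠ b) {f : ℝ → X} (hf : ContinuousOn f (Icc a b))
    {ε : ℝ} (hε : 0 < ε) :
    luxNorm (fun _ => ⊤) (Icc a b) f ≤ ε ↔ ∀ s ∈ Icc a b, ‖f s‖ ≤ ε :=
  ⟨forall_norm_le_of_luxNorm_top_le hab hf, luxNorm_top_le_of_forall_norm_le measurableSet_Icc hε⟩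

end LuxemburgTop

section Translates

variable {X : Type*} [NormedAddCommGroup X] {I : Set ℝ} {f : ℝ → X}

lemma IsUpperSet.add_mem (hI : IsUpperSet I) {t s : ℝ} (ht : t ∈ I) (hs : 0 ≤ s) : t + s ∈ I :=
  hI (le_add_of_nonneg_right hs) ht

lemma ContinuousOn.translate_Icc (hI : IsUpperSet I) (hf : ContinuousOn f I) {t : ℝ}
    (ht : t ∈ I) : ContinuousOn (fun s => f (t + s)) (Icc 0 1) :=
  hf.comp (continuous_const_add t).continuousOn fun _ hs => hI.add_mem ht hs.1

lemma ContinuousOn.exists_translate_dist_le (hIc : IsClosed I) (hI : IsUpperSet I)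
    (hf : ContinuousOn f I) {t : ℝ} (ht : t ∈ I) {ε : ℝ} (hε : 0 < ε) :
    ∃ δ > 0, ∀ t' ∈ I, |t' - t| < δ → ∀ s ∈ Icc (0 : ℝ) 1, ‖f (t' + s) - f (t + s)‖ ≤ ε := by
  set K := I ∩ Icc (t - 1) (t + 2)
  have hfK : UniformContinuousOn f K :=
    (isCompact_Icc.inter_left hIc).uniformContinuousOn_of_continuous (hf.mono inter_subset_left)
  obtain ⟨δ, hδ, hδK⟩ := Metric.uniformContinuousOn_iff.mp hfK ε hε
  refine ⟨min δ 1, by positivity, fun t' ht' htt' s hs => ?_⟩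
  have hmem : ∀ u ∈ I, |u - t| < 1 → u + s ∈ K := fun u hu hut =>
    ⟨hI.add_mem hu hs.1, by constructor <;> linarith [abs_lt.mp hut, hs.1, hs.2]⟩
  have hdist : dist (t' + s) (t + s) < δ := by
    rw [Real.dist_eq, add_sub_add_right_eq_sub]
    exact htt'.trans_le (min_le_left _ _)
  rw [← dist_eq_norm]
  exact (hδK _ (hmem t' ht' (htt'.trans_le (min_le_right _ _))) _ (hmem t ht (by simp)) hdist).le

lemma ContinuousOn.forall_luxNorm_top_translate_sub_le_iff (hI : IsUpperSet I)
    (hf : ContinuousOn f I) {τ ε : ℝ} (hτ : 0 ≤ τ) (hε : 0 < ε) :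
    (∀ t ∈ I, luxNorm (fun _ => ⊤) (Icc 0 1) (fun s => f (t + τ + s) - f (t + s)) ≤ ε) ↔
      ∀ t ∈ I, ‖f (t + τ) - f t‖ ≤ ε := by
  have hcont : ∀ t ∈ I, ContinuousOn (fun s => f (t + τ + s) - f (t + s)) (Icc 0 1) :=
    fun t ht => (hf.translate_Icc hI (hI.add_mem ht hτ)).sub (hf.translate_Icc hI ht)
  constructor
  · intro h t ht
    simpa using
      (luxNorm_top_le_iff zero_ne_one (hcont t ht) hε).mp (h t ht) 0 ⟨le_rfl, zero_le_one⟩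
  · intro h t ht
    refine (luxNorm_top_le_iff zero_ne_one (hcont t ht) hε).mpr fun s hs => ?_
    rw [add_right_comm]
    exact h (t + s) (hI.add_mem ht hs.1)

lemma ContinuousOn.almostPeriodicOn_iff_stepanovAP_top (hIc : IsClosed I) (hI : IsUpperSet I)
    (hf : ContinuousOn f I) : AlmostPeriodicOn I f ↔ StepanovAP (fun _ => ⊤) I f := by
  have hperiods : ∀ ε > 0,
      {τ | 0 < τ ∧ ∀ t ∈ I, luxNorm (fun _ => ⊤) (Icc 0 1)
          (fun s => f (t + τ + s) - f (t + s)) ≤ ε} =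
        {τ | 0 < τ ∧ ∀ t ∈ I, ‖f (t + τ) - f t‖ ≤ ε} := fun ε hε => by
    ext τ
    exact and_congr_right fun hτ => hf.forall_luxNorm_top_translate_sub_le_iff hI hτ.le hε
  constructor
  · rintro ⟨-, hap⟩
    refine ⟨fun t ht => isCompact_Icc.memLvar_top measurableSet_Icc (hf.translate_Icc hI ht),
      fun t ht ε hε => ?_, fun ε hε => hperiods ε hε ▸ hap ε hε⟩
    obtain ⟨δ, hδ, hδf⟩ := hf.exists_translate_dist_le hIc hI ht hε
    exact ⟨δ, hδ, fun t' ht' htt' =>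
      luxNorm_top_le_of_forall_norm_le measurableSet_Icc hε (hδf t' ht' htt')⟩
  · rintro ⟨-, -, hap⟩
    exact ⟨hf, fun ε hε => hperiods ε hε ▸ hap ε hε⟩

end Translates

theorem stmt13_general {X : Type*} [NormedAddCommGroup X]
    (I : Set ℝ) (hI : I = univ ∨ I = Ici 0)
    (f : ℝ → X) (hcont : ContinuousOn f I) :
    AlmostPeriodicOn I f ↔ StepanovAP (fun _ => ⊤) I f := by
  obtain ⟨hIc, hIu⟩ : IsClosed I ∧ IsUpperSet I := by
    rcases hI with rfl | rfl
    exacts [⟨isClosed_univ, isUpperSet_univ⟩, ⟨isClosed_Ici, isUpperSet_Ici 0⟩]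
  exact hcont.almostPeriodicOn_iff_stepanovAP_top hIc hIu

theorem stmt13 {X : Type*} [NormedAddCommGroup X]
    (I : Set ℝ) (hI : I = univ ∨ I = Ici 0)
    (f : ℝ → X) (hcont : ContinuousOn f I) (hbd : ∃ C, ∀ t ∈ I, ‖f t‖ ≤ C) :
    AlmostPeriodicOn I f ↔ StepanovAP (fun _ => ⊤) I f :=
  stmt13_general I hI f hcont
end
end
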